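/- arXiv:1901.06599 — 3 statements merged into one kernel-verified Lean document; each statement's English description precedes it below -/
import Mathlib

section
/- Let R be a Noetherian domain with an ideal 𝓘 and let n be a prime of the coefficient ring. The natural surjection s : Rees_R(𝓘) ⊗ R/nR → Rees_{R/nR}(I) (where I = (𝓘 + nR)/nR ≠ 0) has kernel annihilated by a power of 𝓘: there exists l > 0 with 𝓘^l · ker(s) = 0. -/
open Polynomial

/-- Auxiliary: a monomial whose coefficient lies in `n * 𝓘^d` gives an element of the
Rees algebra lying in `n · Rees_R(𝓘)`. -/
lemma stmt12_monomial_mem_map {R : Type*} [CommRing R] (𝓘 n : Ideal R) (d : ℕ) (c : R)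
    (hc : c ∈ n * 𝓘 ^ d) :
    ∃ h : (monomial d c : R[X]) ∈ reesAlgebra 𝓘,
      (⟨monomial d c, h⟩ : reesAlgebra 𝓘) ∈ n.map (algebraMap R (reesAlgebra 𝓘)) := by
  refine Submodule.mul_induction_on hc ?_ ?_
  · intro a ha b hb
    have hb' : (monomial d b : R[X]) ∈ reesAlgebra 𝓘 := reesAlgebra.monomial_mem.mpr hb
    have hm : (monomial d (a * b) : R[X]) ∈ reesAlgebra 𝓘 :=
      reesAlgebra.monomial_mem.mpr (Ideal.mul_mem_left _ a hb)
    refine ⟨hm, ?_⟩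
    have heq : (⟨monomial d (a * b), hm⟩ : reesAlgebra 𝓘)
        = algebraMap R (reesAlgebra 𝓘) a * ⟨monomial d b, hb'⟩ := by
      apply Subtype.ext
      simp [C_mul_monomial]
    rw [heq]
    exact Ideal.mul_mem_right _ _ (Ideal.mem_map_of_mem _ ha)
  · rintro x y ⟨hx, hx'⟩ ⟨hy, hy'⟩
    have hxy : (monomial d (x + y) : R[X]) ∈ reesAlgebra 𝓘 := by
      rw [map_add]; exact add_mem hx hy
    refine ⟨hxy, ?_⟩
    have heq : (⟨monomial d (x + y), hxy⟩ : reesAlgebra 𝓘)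
        = ⟨monomial d x, hx⟩ + ⟨monomial d y, hy⟩ := by
      apply Subtype.ext; simp [map_add]
    rw [heq]
    exact add_mem hx' hy'

/-- Auxiliary: a polynomial in the Rees algebra all of whose coefficients lie in
`n * 𝓘^d` (degreewise) lies in `n · Rees_R(𝓘)`. -/
lemma stmt12_coeffs_mem_map {R : Type*} [CommRing R] (𝓘 n : Ideal R) :
    ∀ (N : ℕ) (f : R[X]), f.support.card ≤ N → ∀ (hS : f ∈ reesAlgebra 𝓘),
      (∀ d, f.coeff d ∈ n * 𝓘 ^ d) →
      (⟨f, hS⟩ : reesAlgebra 𝓘) ∈ n.map (algebraMap R (reesAlgebra 𝓘)) := by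
  intro N
  induction N with
  | zero =>
    intro f hcard hS _
    have hf : f = 0 := by
      rwa [Nat.le_zero, Finset.card_eq_zero, Polynomial.support_eq_empty] at hcard
    subst hf
    have : (⟨(0 : R[X]), hS⟩ : reesAlgebra 𝓘) = 0 := rfl
    rw [this]; exact zero_mem _
  | succ N ih =>
    intro f hcard hS hcoeff
    by_cases hf0 : f = 0
    · subst hf0
      have : (⟨(0 : R[X]), hS⟩ : reesAlgebra 𝓘) = 0 := rfl
      rw [this]; exact zero_mem _
    · -- split off the leading term
      have hcoeff_erase : ∀ d, (f.eraseLead).coeff d ∈ n * 𝓘 ^ d := by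
        intro d
        rw [Polynomial.eraseLead_coeff]
        split
        · exact zero_mem _
        · exact hcoeff d
      have hS_erase : f.eraseLead ∈ reesAlgebra 𝓘 := by
        rw [mem_reesAlgebra_iff]
        intro i
        exact (Ideal.mul_le_right : n * 𝓘 ^ i ≤ 𝓘 ^ i) (hcoeff_erase i)
      have hcard' : f.eraseLead.support.card ≤ N := by
        have := Polynomial.eraseLead_support_card_lt hf0
        omega
      have h1 := ih f.eraseLead hcard' hS_erase hcoeff_erase
      obtain ⟨hm, h2⟩ := stmt12_monomial_mem_map 𝓘 n f.natDegree f.leadingCoeff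
        (hcoeff f.natDegree)
      have heq : (⟨f, hS⟩ : reesAlgebra 𝓘)
          = ⟨f.eraseLead, hS_erase⟩ + ⟨monomial f.natDegree f.leadingCoeff, hm⟩ := by
        apply Subtype.ext
        simp [Polynomial.eraseLead_add_monomial_natDegree_leadingCoeff]
      rw [heq]
      exact add_mem h1 h2

/-- Let `R` be a Noetherian domain with an ideal `𝓘` and let `n` be a
prime (here: a prime ideal of `R`, playing the role of the extended ideal `nR` from the
coefficient ring).  The natural surjection
`s : Rees_R(𝓘) ⊗ R/n → Rees_{R/n}(I)` (where `I = (𝓘 + n)/n ≠ 0`), induced by the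
coefficientwise reduction map `φ` below, has kernel annihilated by a power of `𝓘`:
there exists `l > 0` with `𝓘^l · ker(s) = 0`, i.e. `𝓘^l · ker(φ) ⊆ n·Rees_R(𝓘)`. -/
theorem stmt_12 {R : Type*} [CommRing R] [IsDomain R] [IsNoetherianRing R]
    (𝓘 n : Ideal R) [n.IsPrime]
    (hI : 𝓘.map (Ideal.Quotient.mk n) ≠ ⊥)
    (φ : ↥(reesAlgebra 𝓘) →+* ↥(reesAlgebra (𝓘.map (Ideal.Quotient.mk n))))
    (hφ : ∀ x : ↥(reesAlgebra 𝓘),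
      (φ x : Polynomial (R ⧸ n)) = Polynomial.map (Ideal.Quotient.mk n) (x : Polynomial R)) :
    ∃ l : ℕ, 0 < l ∧ ∀ a ∈ 𝓘 ^ l, ∀ x ∈ RingHom.ker φ,
      algebraMap R ↥(reesAlgebra 𝓘) a * x ∈ n.map (algebraMap R ↥(reesAlgebra 𝓘)) := by
  -- Artin–Rees lemma applied to the ideal `n` as a submodule of `R`
  obtain ⟨k, hk⟩ := Ideal.exists_pow_inf_eq_pow_smul (M := R) 𝓘 (n : Submodule R R)
  refine ⟨k + 1, Nat.succ_pos k, ?_⟩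
  intro a ha x hx
  -- coefficients of x lie in n
  have hxn : ∀ d, (x : R[X]).coeff d ∈ n := by
    intro d
    have h0 : (φ x : Polynomial (R ⧸ n)) = 0 := by
      rw [RingHom.mem_ker] at hx
      rw [hx]; rfl
    rw [hφ] at h0
    have := congrArg (fun p => Polynomial.coeff p d) h0
    simp only [Polynomial.coeff_map, Polynomial.coeff_zero] at this
    rwa [← Ideal.Quotient.eq_zero_iff_mem]
  -- coefficients of x lie in 𝓘^d
  have hxI : ∀ d, (x : R[X]).coeff d ∈ 𝓘 ^ d := (mem_reesAlgebra_iff 𝓘 (x : R[X])).mp x.2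
  -- key coefficientwise estimate
  have key : ∀ d, a * (x : R[X]).coeff d ∈ n * 𝓘 ^ d := by
    intro d
    have h1 : a * (x : R[X]).coeff d ∈ 𝓘 ^ (k + 1 + d) ⊓ n := by
      constructor
      · rw [pow_add]
        exact Ideal.mul_mem_mul ha (hxI d)
      · exact Ideal.mul_mem_left n a (hxn d)
    have h2 := hk (k + 1 + d) (by omega)
    have h3 : (𝓘 ^ (k + 1 + d) • (⊤ : Submodule R R) ⊓ (n : Submodule R R)
        : Submodule R R) = 𝓘 ^ (k + 1 + d) ⊓ n := by
      rw [Ideal.smul_eq_mul, Ideal.mul_top]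
    rw [h3] at h2
    have h4 : a * (x : R[X]).coeff d
        ∈ 𝓘 ^ (k + 1 + d - k) • ((𝓘 ^ k • (⊤ : Submodule R R) ⊓ n) : Submodule R R) := by
      rw [← h2]; exact h1
    have h5 : (𝓘 ^ (k + 1 + d - k) • ((𝓘 ^ k • (⊤ : Submodule R R) ⊓ n) : Submodule R R)
        : Submodule R R) ≤ (n * 𝓘 ^ d : Ideal R) := by
      rw [Ideal.smul_eq_mul]
      calc (𝓘 ^ (k + 1 + d - k) * ((𝓘 ^ k • (⊤ : Submodule R R) ⊓ n)) : Ideal R)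
          ≤ 𝓘 ^ (d + 1) * n := by
            have : k + 1 + d - k = d + 1 := by omega
            rw [this]
            exact Ideal.mul_mono le_rfl inf_le_right
        _ ≤ 𝓘 ^ d * n := Ideal.mul_mono (Ideal.pow_le_pow_right (by omega)) le_rfl
        _ = n * 𝓘 ^ d := mul_comm _ _
    exact h5 h4
  -- conclude via the coefficientwise criterion
  have hmem := (algebraMap R ↥(reesAlgebra 𝓘) a * x).2
  have hco : ((algebraMap R ↥(reesAlgebra 𝓘) a * x : ↥(reesAlgebra 𝓘)) : R[X])
      = C a * (x : R[X]) := by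
    push_cast
    rfl
  have := stmt12_coeffs_mem_map 𝓘 n
    ((algebraMap R ↥(reesAlgebra 𝓘) a * x : ↥(reesAlgebra 𝓘)) : R[X]).support.card
    _ le_rfl hmem ?_
  · exact this
  · intro d
    rw [hco, Polynomial.coeff_C_mul]
    exact key d
end

section
/- Let R be a Noetherian ring, 𝓘 ⊆ R an ideal, n ⊆ R an ideal with I := (𝓘 + n)/n ≠ 0 in R/n. In the ring B := Rees_R(𝓘) ⊗_R R/n, the kernel K of the natural surjection B → Rees_{R/n}(I) is a prime ideal that is a minimal prime of B, and every other minimal prime of B contains 𝓘B. -/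
open Polynomial

/-- Monomials with coefficient in `n * 𝓘 ^ i` lie in `n · Rees`. -/
lemma aux_monomial_mem {R : Type*} [CommRing R] (𝓘 n : Ideal R) (i : ℕ) (c : R)
    (hc : c ∈ n * 𝓘 ^ i) :
    ∃ h : (monomial i c : R[X]) ∈ reesAlgebra 𝓘,
      (⟨monomial i c, h⟩ : ↥(reesAlgebra 𝓘)) ∈ n.map (algebraMap R ↥(reesAlgebra 𝓘)) := by
  refine Submodule.mul_induction_on hc ?_ ?_
  · intro e he f hf
    refine ⟨reesAlgebra.monomial_mem.2 (Ideal.mul_mem_left _ _ hf), ?_⟩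
    have h2 : (monomial i f : R[X]) ∈ reesAlgebra 𝓘 := reesAlgebra.monomial_mem.2 hf
    have : (⟨monomial i (e * f), reesAlgebra.monomial_mem.2 (Ideal.mul_mem_left _ _ hf)⟩ :
        ↥(reesAlgebra 𝓘)) = algebraMap R _ e * ⟨monomial i f, h2⟩ := by
      ext
      simp [Algebra.smul_def, C_mul_monomial]
    rw [this]
    exact Ideal.mul_mem_right _ _ (Ideal.mem_map_of_mem _ he)
  · rintro x y ⟨hx, hx'⟩ ⟨hy, hy'⟩
    refine ⟨by simpa [map_add] using add_mem hx hy, ?_⟩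
    have : (⟨monomial i (x + y), by simpa [map_add] using add_mem hx hy⟩ :
        ↥(reesAlgebra 𝓘)) = ⟨monomial i x, hx⟩ + ⟨monomial i y, hy⟩ := by
      ext; simp [map_add]
    rw [this]
    exact add_mem hx' hy'

lemma aux_poly_mem {R : Type*} [CommRing R] (𝓘 n : Ideal R) (q : R[X])
    (haux : ∀ i c, c ∈ n * 𝓘 ^ i → ∃ h : (monomial i c : R[X]) ∈ reesAlgebra 𝓘,
      (⟨monomial i c, h⟩ : ↥(reesAlgebra 𝓘)) ∈ n.map (algebraMap R ↥(reesAlgebra 𝓘)))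
    (hq : ∀ i, q.coeff i ∈ n * 𝓘 ^ i) :
    ∃ h : q ∈ reesAlgebra 𝓘,
      (⟨q, h⟩ : ↥(reesAlgebra 𝓘)) ∈ n.map (algebraMap R ↥(reesAlgebra 𝓘)) := by
  have key : ∀ p : R[X], p ∈ Submodule.span R
      {x : R[X] | ∃ i c, c ∈ n * 𝓘 ^ i ∧ x = monomial i c} →
      ∃ h : p ∈ reesAlgebra 𝓘,
        (⟨p, h⟩ : ↥(reesAlgebra 𝓘)) ∈ n.map (algebraMap R ↥(reesAlgebra 𝓘)) := by
    intro p hp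
    refine Submodule.span_induction ?_ ?_ ?_ ?_ hp
    · rintro x ⟨i, c, hc, rfl⟩; exact haux i c hc
    · refine ⟨zero_mem _, ?_⟩
      have : (⟨(0 : R[X]), zero_mem _⟩ : ↥(reesAlgebra 𝓘)) = 0 := rfl
      rw [this]; exact zero_mem _
    · rintro x y _ _ ⟨hx, hx'⟩ ⟨hy, hy'⟩
      refine ⟨add_mem hx hy, ?_⟩
      have : (⟨x + y, add_mem hx hy⟩ : ↥(reesAlgebra 𝓘)) = ⟨x, hx⟩ + ⟨y, hy⟩ := rfl
      rw [this]; exact add_mem hx' hy'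
    · rintro r x _ ⟨hx, hx'⟩
      refine ⟨Subalgebra.smul_mem _ hx r, ?_⟩
      have : (⟨r • x, Subalgebra.smul_mem _ hx r⟩ : ↥(reesAlgebra 𝓘)) = r • ⟨x, hx⟩ := rfl
      rw [this, Algebra.smul_def]; exact Ideal.mul_mem_left _ _ hx'
  refine key q ?_
  rw [q.as_sum_support]
  refine Submodule.sum_mem _ fun i _ => Submodule.subset_span ⟨i, q.coeff i, hq i, rfl⟩

lemma aux_AR {R : Type*} [CommRing R] [IsNoetherianRing R] (𝓘 n : Ideal R) :
    ∃ k : ℕ, ∀ i : ℕ, 𝓘 ^ k * (n ⊓ 𝓘 ^ i) ≤ n * 𝓘 ^ i := by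
  obtain ⟨k, hk⟩ := Ideal.exists_pow_inf_eq_pow_smul 𝓘 (n : Submodule R R)
  refine ⟨k, fun i => ?_⟩
  have h1 : 𝓘 ^ k * (n ⊓ 𝓘 ^ i) ≤ 𝓘 ^ (i + k) • (⊤ : Submodule R R) ⊓ n := by
    refine le_inf ?_ ?_
    · rw [smul_eq_mul, Ideal.mul_top]
      calc 𝓘 ^ k * (n ⊓ 𝓘 ^ i) ≤ 𝓘 ^ k * 𝓘 ^ i := Ideal.mul_mono_right inf_le_right
        _ = 𝓘 ^ (i + k) := by rw [← pow_add, add_comm]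
    · calc 𝓘 ^ k * (n ⊓ 𝓘 ^ i) ≤ 𝓘 ^ k * n := Ideal.mul_mono_right inf_le_left
        _ ≤ n := Ideal.mul_le_right
  have h2 := hk (i + k) (le_add_self)
  rw [h2] at h1
  simp only [Nat.add_sub_cancel] at h1
  refine h1.trans ?_
  rw [smul_eq_mul]
  calc 𝓘 ^ i * (𝓘 ^ k • (⊤ : Submodule R R) ⊓ n) ≤ 𝓘 ^ i * n := Ideal.mul_mono_right inf_le_right
    _ = n * 𝓘 ^ i := mul_comm _ _

/-- Let `R` be a Noetherian ring, `𝓘 ⊆ R` an ideal, `n ⊆ R` an ideal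
(with `R/n` a domain) such that `I := (𝓘 + n)/n ≠ 0` in `R/n`.  In the ring
`B := Rees_R(𝓘) ⊗_R R/n = Rees_R(𝓘)/n·Rees_R(𝓘)`, the kernel `K` of the natural
surjection `B → Rees_{R/n}(I)` is a prime ideal that is a minimal prime of `B`, and every
other minimal prime of `B` contains `𝓘B`. -/
theorem stmt_13 {R : Type*} [CommRing R] [IsNoetherianRing R]
    (𝓘 n : Ideal R) [n.IsPrime]
    (hI : 𝓘.map (Ideal.Quotient.mk n) ≠ ⊥)
    (nRees : Ideal ↥(reesAlgebra 𝓘))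
    (hnRees : nRees = n.map (algebraMap R ↥(reesAlgebra 𝓘)))
    -- the natural specialization map `ψ : B = Rees_R(𝓘)/n·Rees_R(𝓘) → Rees_{R/n}(I)`
    (ψ : (↥(reesAlgebra 𝓘) ⧸ nRees) →+* ↥(reesAlgebra (𝓘.map (Ideal.Quotient.mk n))))
    (hψ : ∀ x : ↥(reesAlgebra 𝓘),
      (ψ (Ideal.Quotient.mk nRees x) : Polynomial (R ⧸ n)) =
        Polynomial.map (Ideal.Quotient.mk n) (x : Polynomial R)) :
    RingHom.ker ψ ∈ minimalPrimes (↥(reesAlgebra 𝓘) ⧸ nRees) ∧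
      ∀ Q ∈ minimalPrimes (↥(reesAlgebra 𝓘) ⧸ nRees), Q ≠ RingHom.ker ψ →
        𝓘.map (algebraMap R (↥(reesAlgebra 𝓘) ⧸ nRees)) ≤ Q := by
  classical
  obtain ⟨k, hk⟩ : ∃ k : ℕ, ∀ i : ℕ, 𝓘 ^ k * (n ⊓ 𝓘 ^ i) ≤ n * 𝓘 ^ i := aux_AR 𝓘 n
  have hKprime : (RingHom.ker ψ).IsPrime := RingHom.ker_isPrime ψ
  -- annihilation
  have annih : ∀ a ∈ 𝓘, ∀ x ∈ RingHom.ker ψ,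
      (algebraMap R (↥(reesAlgebra 𝓘) ⧸ nRees) a) ^ k * x = 0 := by
    intro a ha x hx
    obtain ⟨p, rfl⟩ := Ideal.Quotient.mk_surjective x
    have hker : Polynomial.map (Ideal.Quotient.mk n) (p : R[X]) = 0 := by
      rw [← hψ]
      rw [RingHom.mem_ker] at hx
      rw [hx]
      rfl
    have hcoeffn : ∀ i, (p : R[X]).coeff i ∈ n := by
      intro i
      have := congrArg (fun q => Polynomial.coeff q i) hker
      simpa [Polynomial.coeff_map, Ideal.Quotient.eq_zero_iff_mem] using this
    set y : ↥(reesAlgebra 𝓘) := (algebraMap R ↥(reesAlgebra 𝓘) a) ^ k * p with hy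
    have hycoe : (y : R[X]) = C (a ^ k) * (p : R[X]) := by
      have h1 : ((algebraMap R ↥(reesAlgebra 𝓘) a : ↥(reesAlgebra 𝓘)) : R[X]) = C a := rfl
      rw [hy]
      push_cast
      rw [Polynomial.algebraMap_eq, ← C_pow]
    have hq : ∀ i, (y : R[X]).coeff i ∈ n * 𝓘 ^ i := by
      intro i
      rw [hycoe, coeff_C_mul]
      refine hk i (Ideal.mul_mem_mul (Ideal.pow_mem_pow ha k) ?_)
      exact Submodule.mem_inf.2 ⟨hcoeffn i, (mem_reesAlgebra_iff 𝓘 (p : R[X])).1 p.2 i⟩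
    obtain ⟨h, hmem⟩ : ∃ h : (y : R[X]) ∈ reesAlgebra 𝓘,
        (⟨(y : R[X]), h⟩ : ↥(reesAlgebra 𝓘)) ∈ n.map (algebraMap R ↥(reesAlgebra 𝓘)) :=
      aux_poly_mem 𝓘 n (y : R[X]) (aux_monomial_mem 𝓘 n) hq
    have hy' : y ∈ nRees := by
      rw [hnRees]
      convert hmem using 1
    have hstep : (algebraMap R (↥(reesAlgebra 𝓘) ⧸ nRees) a) ^ k * Ideal.Quotient.mk nRees p
        = Ideal.Quotient.mk nRees y := by
      rw [hy, map_mul, map_pow]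
      rfl
    rw [hstep]
    exact Ideal.Quotient.eq_zero_iff_mem.2 hy'
  -- an element of 𝓘 whose image avoids the kernel
  obtain ⟨a, ha, han⟩ : ∃ a ∈ 𝓘, Ideal.Quotient.mk n a ≠ 0 := by
    by_contra h
    push_neg at h
    apply hI
    refine le_bot_iff.1 (Ideal.map_le_iff_le_comap.2 fun b hb => ?_)
    simpa [Ideal.mem_comap] using h b hb
  have haK : algebraMap R (↥(reesAlgebra 𝓘) ⧸ nRees) a ∉ RingHom.ker ψ := by
    intro hmem
    rw [RingHom.mem_ker] at hmem
    have : (ψ (algebraMap R (↥(reesAlgebra 𝓘) ⧸ nRees) a) : Polynomial (R ⧸ n)) = 0 := by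
      rw [hmem]; rfl
    rw [show algebraMap R (↥(reesAlgebra 𝓘) ⧸ nRees) a
        = Ideal.Quotient.mk nRees (algebraMap R ↥(reesAlgebra 𝓘) a) from rfl, hψ] at this
    apply han
    have hCa : ((algebraMap R ↥(reesAlgebra 𝓘) a : ↥(reesAlgebra 𝓘)) : R[X]) = C a := rfl
    rw [hCa, map_C] at this
    exact (C_eq_zero).1 this
  -- any prime not containing (the image of) 𝓘 contains the kernel
  have hKQ : ∀ Q : Ideal (↥(reesAlgebra 𝓘) ⧸ nRees), Q.IsPrime →
      (∃ b ∈ 𝓘, algebraMap R (↥(reesAlgebra 𝓘) ⧸ nRees) b ∉ Q) → RingHom.ker ψ ≤ Q := by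
    rintro Q hQ ⟨b, hb, hbQ⟩ x hx
    have h0 : (algebraMap R (↥(reesAlgebra 𝓘) ⧸ nRees) b) ^ k * x ∈ Q := by
      rw [annih b hb x hx]; exact Q.zero_mem
    rcases hQ.mem_or_mem h0 with h | h
    · exact absurd (hQ.mem_of_pow_mem k h) hbQ
    · exact h
  constructor
  · refine ⟨⟨hKprime, bot_le⟩, ?_⟩
    rintro P ⟨hP, -⟩ hPK
    exact hKQ P hP ⟨a, ha, fun h => haK (hPK h)⟩
  · intro Q hQ hne
    by_contra hle
    have hle' : ¬ 𝓘 ≤ Ideal.comap (algebraMap R (↥(reesAlgebra 𝓘) ⧸ nRees)) Q :=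
      fun h => hle (Ideal.map_le_iff_le_comap.2 h)
    obtain ⟨b, hb, hbQ⟩ := SetLike.not_le_iff_exists.1 hle'
    have hKle : RingHom.ker ψ ≤ Q := hKQ Q hQ.1.1 ⟨b, hb, hbQ⟩
    exact hne (le_antisymm (hQ.2 ⟨hKprime, bot_le⟩ hKle) hKle)
end

section
/- Let k be a field of characteristic zero, C ⊆ B a finite (module-finite) extension of finitely generated k-domains with C integrally closed. Let b ⊂ B be a prime ideal and c = b ∩ C. Then [Quot(B/b) : Quot(C/c)] ≤ [Quot(B) : Quot(C)]. -/
open Polynomial IntermediateField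

/-- From an integral relation for a nonzero element of a domain, extract a monic relation
with nonzero constant coefficient. -/
private lemma aux_exists_monic {C B : Type*} [CommRing C] [CommRing B] [IsDomain B] [Algebra C B]
    {y : B} (hy : y ≠ 0) :
    ∀ (n : ℕ) (p : C[X]), p.natDegree ≤ n → p.Monic → aeval y p = 0 →
      ∃ q : C[X], q.Monic ∧ aeval y q = 0 ∧ q.coeff 0 ≠ 0 := by
  intro n
  induction n with
  | zero =>
    intro p hdeg hm hev
    rw [hm.natDegree_eq_zero.mp (Nat.le_zero.mp hdeg)] at hev
    simp at hev
  | succ n ih =>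
    intro p hdeg hm hev
    by_cases h0 : p.coeff 0 = 0
    · have hd0 : p.natDegree ≠ 0 := by
        intro h
        rw [hm.natDegree_eq_zero.mp h] at hev
        simp at hev
      have hp : p.divX * X = p := by
        have h1 := p.divX_mul_X_add
        rwa [h0, map_zero, add_zero] at h1
      have hev' : aeval y p.divX * y = 0 := by
        rw [← hp] at hev
        simpa using hev
      have hev'' : aeval y p.divX = 0 := by
        rcases mul_eq_zero.mp hev' with h | h
        · exact h
        · exact absurd h hy
      have hmon : p.divX.Monic := by
        show p.divX.leadingCoeff = 1
        rw [Polynomial.leadingCoeff, Polynomial.natDegree_divX_eq_natDegree_tsub_one,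
          Polynomial.coeff_divX, Nat.sub_add_cancel (Nat.one_le_iff_ne_zero.mpr hd0)]
        exact hm.coeff_natDegree
      refine ih p.divX ?_ hmon hev''
      rw [Polynomial.natDegree_divX_eq_natDegree_tsub_one]
      omega
    · exact ⟨p, hm, hev, h0⟩

/-- The fraction field of `B` is the localization of `B` at the image of `C⁰`, when `B` is an
integral extension of the domain `C`. -/
private lemma aux_isLocalization (C B L : Type*) [CommRing C] [IsDomain C] [CommRing B]
    [IsDomain B] [Field L] [Algebra C B] [Algebra B L] [Algebra C L] [IsScalarTower C B L]
    [IsFractionRing B L] [Algebra.IsIntegral C B]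
    (hinj : Function.Injective (algebraMap C B)) :
    IsLocalization (Algebra.algebraMapSubmonoid B (nonZeroDivisors C)) L := by
  refine ⟨?_, ?_, ?_⟩
  · rintro ⟨-, d, hd, rfl⟩
    have hd0 : d ≠ 0 := nonZeroDivisors.ne_zero hd
    have h1 : algebraMap C B d ≠ 0 := fun h => hd0 (hinj (by rwa [map_zero]))
    have h2 : algebraMap B L (algebraMap C B d) ≠ 0 :=
      fun h => h1 (IsFractionRing.injective B L (by rwa [map_zero]))
    exact isUnit_iff_ne_zero.mpr h2
  · intro z
    obtain ⟨⟨x, y⟩, e⟩ := IsLocalization.mk'_surjective (nonZeroDivisors B) z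
    have hy0 : (y : B) ≠ 0 := nonZeroDivisors.ne_zero y.2
    obtain ⟨P, hPm, hP⟩ := Algebra.IsIntegral.isIntegral (R := C) (y : B)
    obtain ⟨q, qm, hq, hq0⟩ := aux_exists_monic hy0 P.natDegree P le_rfl hPm hP
    set w : B := aeval (y : B) q.divX with hw
    have hrel : algebraMap C B (q.coeff 0) = -((y : B) * w) := by
      have h1 : aeval (y : B) (q.divX * X + Polynomial.C (q.coeff 0)) = 0 := by
        rw [q.divX_mul_X_add]; exact hq
      simp only [map_add, map_mul, aeval_X, aeval_C] at h1
      rw [mul_comm] at h1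
      exact eq_neg_of_add_eq_zero_right h1
    refine ⟨⟨-(x * w), ⟨algebraMap C B (q.coeff 0), ⟨q.coeff 0,
      mem_nonZeroDivisors_iff_ne_zero.mpr hq0, rfl⟩⟩⟩, ?_⟩
    have e' : z * algebraMap B L (y : B) = algebraMap B L x := by
      rw [← e]; exact IsLocalization.mk'_spec L x y
    show z * algebraMap B L (algebraMap C B (q.coeff 0)) = algebraMap B L (-(x * w))
    rw [hrel, map_neg, map_neg, map_mul, map_mul, ← e']
    ring
  · intro x y h
    exact ⟨1, by rw [IsFractionRing.injective B L h]⟩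



/-- Let `k` be a field of characteristic zero, `C ⊆ B` a finite
(module-finite) extension of finitely generated `k`-domains with `C` integrally closed.
Let `b ⊂ B` be a prime ideal and `c = b ∩ C`.  Then
`[Quot(B/b) : Quot(C/c)] ≤ [Quot(B) : Quot(C)]`.  Fraction fields are abstracted via
`IsFractionRing`, and the compatibilities express that the maps of fraction fields extend
the inclusion `C ⊆ B`, resp. the induced map `C/c → B/b`. -/
theorem stmt_14 {k C B : Type*} [Field k] [CharZero k]
    [CommRing C] [IsDomain C] [Algebra k C] [Algebra.FiniteType k C]
    [CommRing B] [IsDomain B] [Algebra k B] [Algebra.FiniteType k B]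
    [Algebra C B] [Module.Finite C B] (hinj : Function.Injective (algebraMap C B))
    [IsIntegrallyClosed C]
    (b : Ideal B) (hb : b.IsPrime) (c : Ideal C) (hc : c = b.comap (algebraMap C B))
    -- fraction fields of `C` and `B` and the induced inclusion `Quot C ⊆ Quot B`
    (K L : Type*) [Field K] [Field L] [Algebra C K] [IsFractionRing C K]
    [Algebra B L] [IsFractionRing B L] [Algebra K L]
    (hKL : ∀ x : C, algebraMap K L (algebraMap C K x) = algebraMap B L (algebraMap C B x))
    -- fraction fields of `C/c` and `B/b` and the induced inclusion `Quot(C/c) ⊆ Quot(B/b)`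
    (K' L' : Type*) [Field K'] [Field L'] [Algebra (C ⧸ c) K'] [IsFractionRing (C ⧸ c) K']
    [Algebra (B ⧸ b) L'] [IsFractionRing (B ⧸ b) L'] [Algebra K' L']
    (hK'L' : ∀ x : C, algebraMap K' L' (algebraMap (C ⧸ c) K' (Ideal.Quotient.mk c x)) =
      algebraMap (B ⧸ b) L' (Ideal.Quotient.mk b (algebraMap C B x))) :
    Module.finrank K' L' ≤ Module.finrank K L := by
  haveI := hb
  haveI : c.IsPrime := hc ▸ Ideal.IsPrime.comap (algebraMap C B)
  -- base level instances
  letI : Algebra C L := ((algebraMap B L).comp (algebraMap C B)).toAlgebra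
  haveI : IsScalarTower C B L := IsScalarTower.of_algebraMap_eq' rfl
  haveI : IsScalarTower C K L := IsScalarTower.of_algebraMap_eq fun x => (hKL x).symm
  haveI : IsLocalization (Algebra.algebraMapSubmonoid B (nonZeroDivisors C)) L :=
    aux_isLocalization C B L hinj
  haveI : FiniteDimensional K L :=
    Module.Finite.of_isLocalization C B (Rₚ := K) (Sₚ := L) (nonZeroDivisors C)
  -- quotient level instances
  have hle : c ≤ Ideal.comap (algebraMap C B) b := hc.le
  letI : Algebra (C ⧸ c) (B ⧸ b) := (Ideal.quotientMap b (algebraMap C B) hle).toAlgebra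
  have hinj' : Function.Injective (algebraMap (C ⧸ c) (B ⧸ b)) :=
    Ideal.quotientMap_injective' (H := hle) hc.ge
  haveI : IsScalarTower C (C ⧸ c) (B ⧸ b) := IsScalarTower.of_algebraMap_eq fun x => rfl
  haveI : Module.Finite C (B ⧸ b) :=
    Module.Finite.of_surjective (IsScalarTower.toAlgHom C B (B ⧸ b)).toLinearMap
      Ideal.Quotient.mk_surjective
  haveI : Module.Finite (C ⧸ c) (B ⧸ b) := Module.Finite.of_restrictScalars_finite C _ _
  letI : Algebra (C ⧸ c) L' :=
    ((algebraMap (B ⧸ b) L').comp (algebraMap (C ⧸ c) (B ⧸ b))).toAlgebra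
  haveI : IsScalarTower (C ⧸ c) (B ⧸ b) L' := IsScalarTower.of_algebraMap_eq' rfl
  haveI : IsScalarTower (C ⧸ c) K' L' := IsScalarTower.of_algebraMap_eq (by
    intro x
    obtain ⟨x, rfl⟩ := Ideal.Quotient.mk_surjective x
    exact (hK'L' x).symm)
  haveI : IsLocalization (Algebra.algebraMapSubmonoid (B ⧸ b) (nonZeroDivisors (C ⧸ c))) L' :=
    aux_isLocalization _ _ _ hinj'
  haveI : FiniteDimensional K' L' :=
    Module.Finite.of_isLocalization (C ⧸ c) (B ⧸ b) (Rₚ := K') (Sₚ := L') (nonZeroDivisors (C ⧸ c))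
  -- `K'` has characteristic zero, so `L'/K'` is separable
  letI : Algebra k K' :=
    ((algebraMap (C ⧸ c) K').comp ((Ideal.Quotient.mk c).comp (algebraMap k C))).toAlgebra
  haveI : CharZero K' := charZero_of_injective_algebraMap (algebraMap k K').injective
  haveI : Algebra.IsSeparable K' L' := inferInstance
  -- primitive element, adjusted to lie in the image of `B ⧸ b`
  obtain ⟨α, hα⟩ := Field.exists_primitive_element K' L'
  obtain ⟨⟨x, s⟩, hxs⟩ := IsLocalization.mk'_surjective
    (Algebra.algebraMapSubmonoid (B ⧸ b) (nonZeroDivisors (C ⧸ c))) α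
  obtain ⟨d, hd, hds⟩ := s.2
  have hd0 : d ≠ 0 := nonZeroDivisors.ne_zero hd
  set β : L' := algebraMap (B ⧸ b) L' x with hβ
  set u : K' := algebraMap (C ⧸ c) K' d with hu
  have hu0 : u ≠ 0 := fun h => hd0 (IsFractionRing.injective (C ⧸ c) K' (by rwa [map_zero]))
  have hkey : α * algebraMap K' L' u = β := by
    have h1 : algebraMap K' L' u = algebraMap (B ⧸ b) L' (s : B ⧸ b) := by
      obtain ⟨d', rfl⟩ := Ideal.Quotient.mk_surjective d
      rw [hu, hK'L' d', ← hds]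
      rfl
    rw [h1, ← hxs]
    exact IsLocalization.mk'_spec L' x s
  have hβtop : K'⟮β⟯ = ⊤ := by
    have hαmem : α ∈ K'⟮β⟯ := by
      have hβmem : β ∈ K'⟮β⟯ := IntermediateField.mem_adjoin_simple_self K' β
      have hun : algebraMap K' L' u ≠ 0 := fun h => hu0 ((algebraMap K' L').injective
        (by rwa [map_zero]))
      have : α = algebraMap K' L' u⁻¹ * β := by
        rw [map_inv₀, ← hkey]
        field_simp
      rw [this]
      exact mul_mem (K'⟮β⟯.algebraMap_mem _) hβmem
    refine le_antisymm le_top ?_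
    rw [← hα]
    exact IntermediateField.adjoin_simple_le_iff.mpr hαmem
  -- express the degree via the minimal polynomial of `β`
  have hβint : IsIntegral K' β := IsIntegral.of_finite K' β
  have hfr : Module.finrank K' L' = (minpoly K' β).natDegree := by
    have h2 := IntermediateField.adjoin.finrank hβint
    rw [hβtop, IntermediateField.finrank_top'] at h2
    exact h2
  -- lift the generator to `B` and compare minimal polynomials
  obtain ⟨xt, rfl⟩ := Ideal.Quotient.mk_surjective x
  have hxtint : IsIntegral C xt := IsIntegral.of_finite C xt
  set p : C[X] := minpoly C xt with hp
  have hpm : p.Monic := minpoly.monic hxtint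
  set φ : C →+* K' := (algebraMap (C ⧸ c) K').comp (Ideal.Quotient.mk c) with hφ
  have hψ : (algebraMap K' L').comp φ =
      ((algebraMap (B ⧸ b) L').comp (Ideal.Quotient.mk b)).comp (algebraMap C B) :=
    RingHom.ext fun t => hK'L' t
  have heval : aeval β (p.map φ) = 0 := by
    rw [aeval_def, eval₂_map, hψ]
    have : β = ((algebraMap (B ⧸ b) L').comp (Ideal.Quotient.mk b)) xt := rfl
    rw [this, ← Polynomial.hom_eval₂]
    have h4 : eval₂ (algebraMap C B) xt p = 0 := minpoly.aeval C xt
    rw [h4, map_zero]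
  have hdvd : minpoly K' β ∣ p.map φ := minpoly.dvd K' β heval
  have hne : p.map φ ≠ 0 := (hpm.map φ).ne_zero
  have heqf : minpoly K (algebraMap B L xt) = p.map (algebraMap C K) :=
    minpoly.isIntegrallyClosed_eq_field_fractions K L hxtint
  calc Module.finrank K' L' = (minpoly K' β).natDegree := hfr
    _ ≤ (p.map φ).natDegree := Polynomial.natDegree_le_of_dvd hdvd hne
    _ = p.natDegree := hpm.natDegree_map φ
    _ = (minpoly K (algebraMap B L xt)).natDegree := by
        rw [heqf, hpm.natDegree_map]
    _ ≤ Module.finrank K L := minpoly.natDegree_le _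
end
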